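/- arXiv:2405.03597 — 2 statements merged into one kernel-verified Lean document; each statement's English description precedes it below -/
import Mathlib

section
/- Let L ≥ 1, T > 0, let g : ℝ → ℝ be square-integrable with autocorrelation G(τ) = ∫_ℝ g(t) g(t − τ) dt, and let s_0, …, s_{L−1} be mutually independent complex random variables with E[s_n] = 0 and E[|s_n|⁴] < ∞ for all n. Define χ_s(τ) = (Σ_{n=0}^{L−1} |s_n|²) · G(τ) and χ_c(τ) = Σ_{n=0}^{L−1} Σ_{m=0, m≠n}^{L−1} s_n · conj(s_m) · G(τ + (m − n)T). Then for every τ ∈ ℝ, E[χ_s(τ) · conj(χ_c(τ))] = 0; in particular, since E[χ_c(τ)] = 0, the random variables χ_s(τ) and χ_c(τ) are uncorrelated. -/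
open MeasureTheory ProbabilityTheory Complex Finset
open scoped ComplexConjugate ENNReal

/-!
Expanding `χ_s(τ) · conj(χ_c(τ))` gives a combination of the moments `E[|s_k|² conj(s_n) s_m]`
with `n ≠ m`. One of `n`, `m` differs from `k`; that symbol is independent of the product of the
other two factors and has mean zero, so each moment vanishes. Fourth moments make every term
integrable by Hölder's inequality (`|s_k|² ∈ L²` and `conj(s_n) s_m ∈ L²`).
-/

instance : ENNReal.HolderTriple 4 4 2 where
  inv_add_inv_eq_inv := by
    rw [show (4 : ℝ≥0∞) = 2 * 2 by norm_num, ENNReal.mul_inv (by simp) (by simp), ← mul_add,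
      ENNReal.inv_two_add_inv_two, mul_one]

section
variable {Ω ι : Type*} [MeasurableSpace Ω] {μ : Measure Ω}

lemma integrable_and_integral_finsetSum_eq_zero {E : Type*} [NormedAddCommGroup E]
    [NormedSpace ℝ E] (t : Finset ι) {f : ι → Ω → E}
    (hf : ∀ i ∈ t, Integrable (f i) μ ∧ ∫ ω, f i ω ∂μ = 0) :
    Integrable (fun ω => ∑ i ∈ t, f i ω) μ ∧ ∫ ω, ∑ i ∈ t, f i ω ∂μ = 0 :=
  ⟨integrable_finsetSum t fun i hi => (hf i hi).1, by
    rw [integral_finsetSum t fun i hi => (hf i hi).1]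
    exact sum_eq_zero fun i hi => (hf i hi).2⟩

lemma integrable_and_integral_mul_const_eq_zero {f : Ω → ℂ} (c : ℂ)
    (hf : Integrable f μ ∧ ∫ ω, f ω ∂μ = 0) :
    Integrable (fun ω => f ω * c) μ ∧ ∫ ω, f ω * c ∂μ = 0 :=
  ⟨hf.1.mul_const c, by rw [integral_mul_const, hf.2, zero_mul]⟩

namespace MeasureTheory.MemLp

lemma integrable_mul_conj {f g : Ω → ℂ} (hf : MemLp f 2 μ) (hg : MemLp g 2 μ) :
    Integrable (fun ω => f ω * conj (g ω)) μ :=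
  hf.integrable_mul hg.star

lemma integrable_norm_sq_mul_conj_mul {f g h : Ω → ℂ} (hf : MemLp f 4 μ)
    (hg : MemLp g 4 μ) (hh : MemLp h 4 μ) :
    Integrable (fun ω => ((‖f ω‖ ^ 2 : ℝ) : ℂ) * (conj (g ω) * h ω)) μ := by
  have hf2 : MemLp (fun ω => f ω * conj (f ω)) 2 μ := hf.star.mul' hf
  have hgh : MemLp (fun ω => conj (g ω) * h ω) 2 μ := hh.mul' hg.star
  simpa only [Pi.mul_def, mul_conj', ofReal_pow] using hf2.integrable_mul hgh

end MeasureTheory.MemLp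

variable {s : ι → Ω → ℂ}

namespace ProbabilityTheory.iIndepFun

lemma integral_mul_conj_eq_zero (hind : iIndepFun s μ)
    (hmeas : ∀ i, AEMeasurable (s i) μ) (hmean : ∀ i, ∫ ω, s i ω ∂μ = 0) {n m : ι}
    (hnm : n ≠ m) : ∫ ω, s n ω * conj (s m ω) ∂μ = 0 := by
  calc ∫ ω, s n ω * conj (s m ω) ∂μ = (∫ ω, s n ω ∂μ) * ∫ ω, conj (s m ω) ∂μ :=
        (hind.indepFun hnm).integral_fun_comp_mul_comp (f := fun z => z) (g := conj) (hmeas n)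
          (hmeas m) aestronglyMeasurable_id Complex.continuous_conj.aestronglyMeasurable
    _ = 0 := by rw [hmean n, zero_mul]

lemma integral_norm_sq_mul_conj_mul_eq_zero (hind : iIndepFun s μ)
    (hmeas : ∀ i, AEMeasurable (s i) μ) (hmean : ∀ i, ∫ ω, s i ω ∂μ = 0) (k : ι) {n m : ι}
    (hnm : n ≠ m) : ∫ ω, ((‖s k ω‖ ^ 2 : ℝ) : ℂ) * (conj (s n ω) * s m ω) ∂μ = 0 := by
  by_cases hkm : k = m
  · subst hkm
    calc ∫ ω, ((‖s k ω‖ ^ 2 : ℝ) : ℂ) * (conj (s n ω) * s k ω) ∂μ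
        = ∫ ω, conj (s n ω) * (((‖s k ω‖ ^ 2 : ℝ) : ℂ) * s k ω) ∂μ := by
          congr with ω; ring
      _ = (∫ ω, conj (s n ω) ∂μ) * ∫ ω, ((‖s k ω‖ ^ 2 : ℝ) : ℂ) * s k ω ∂μ :=
          (hind.indepFun hnm).integral_fun_comp_mul_comp (f := conj)
            (g := fun z => ((‖z‖ ^ 2 : ℝ) : ℂ) * z) (hmeas n) (hmeas k)
            Complex.continuous_conj.aestronglyMeasurable (by fun_prop)
      _ = 0 := by rw [integral_conj, hmean n, map_zero, zero_mul]
  · calc ∫ ω, ((‖s k ω‖ ^ 2 : ℝ) : ℂ) * (conj (s n ω) * s m ω) ∂μ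
        = ∫ ω, ((‖s k ω‖ ^ 2 : ℝ) : ℂ) * conj (s n ω) * s m ω ∂μ := by
          congr with ω; ring
      _ = (∫ ω, ((‖s k ω‖ ^ 2 : ℝ) : ℂ) * conj (s n ω) ∂μ) * ∫ ω, s m ω ∂μ :=
          (hind.indepFun_prodMk₀ hmeas k n m hkm hnm).integral_fun_comp_mul_comp
            (f := fun p : ℂ × ℂ => ((‖p.1‖ ^ 2 : ℝ) : ℂ) * conj p.2) (g := id)
            ((hmeas k).prodMk (hmeas n)) (hmeas m) (by fun_prop) aestronglyMeasurable_id
      _ = 0 := by rw [hmean m, mul_zero]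

variable [Fintype ι] [DecidableEq ι]

lemma integral_offDiag_sum_eq_zero (hind : iIndepFun s μ)
    (hmean : ∀ i, ∫ ω, s i ω ∂μ = 0) (h2 : ∀ i, MemLp (s i) 2 μ) (b : ι → ι → ℂ) :
    ∫ ω, ∑ n, ∑ m ∈ univ.erase n, s n ω * conj (s m ω) * b n m ∂μ = 0 := by
  refine (integrable_and_integral_finsetSum_eq_zero _ fun n _ =>
    integrable_and_integral_finsetSum_eq_zero _ fun m hm =>
      integrable_and_integral_mul_const_eq_zero _ ⟨(h2 n).integrable_mul_conj (h2 m), ?_⟩).2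
  exact hind.integral_mul_conj_eq_zero (fun i => (h2 i).aemeasurable) hmean
    (mem_erase.1 hm).1.symm

lemma integral_sum_norm_sq_mul_conj_offDiag_sum_eq_zero (hind : iIndepFun s μ)
    (hmean : ∀ i, ∫ ω, s i ω ∂μ = 0) (h4 : ∀ i, MemLp (s i) 4 μ) (a : ℂ) (b : ι → ι → ℂ) :
    ∫ ω, ((∑ k, ‖s k ω‖ ^ 2 : ℝ) : ℂ) * a *
      conj (∑ n, ∑ m ∈ univ.erase n, s n ω * conj (s m ω) * b n m) ∂μ = 0 := by
  have hexpand : ∀ ω, ((∑ k, ‖s k ω‖ ^ 2 : ℝ) : ℂ) * a *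
      conj (∑ n, ∑ m ∈ univ.erase n, s n ω * conj (s m ω) * b n m) =
      ∑ n, ∑ m ∈ univ.erase n, ∑ k,
        ((‖s k ω‖ ^ 2 : ℝ) : ℂ) * (conj (s n ω) * s m ω) * (a * conj (b n m)) := by
    intro ω
    simp only [map_sum, map_mul, conj_conj, ofReal_sum, Finset.sum_mul, Finset.mul_sum]
    exact sum_congr rfl fun n _ => sum_congr rfl fun m _ => sum_congr rfl fun k _ => by ring
  rw [integral_congr_ae (ae_of_all _ hexpand)]
  refine (integrable_and_integral_finsetSum_eq_zero _ fun n _ =>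
    integrable_and_integral_finsetSum_eq_zero _ fun m hm =>
      integrable_and_integral_finsetSum_eq_zero _ fun k _ =>
        integrable_and_integral_mul_const_eq_zero _
          ⟨(h4 k).integrable_norm_sq_mul_conj_mul (h4 n) (h4 m), ?_⟩).2
  exact hind.integral_norm_sq_mul_conj_mul_eq_zero (fun i => (h4 i).aemeasurable) hmean
    k (mem_erase.1 hm).1.symm

end ProbabilityTheory.iIndepFun

end

theorem statement_3_general {Ω : Type*} [MeasurableSpace Ω] (μ : Measure Ω) [IsProbabilityMeasure μ]
    (L : ℕ) (T : ℝ)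
    (G : ℝ → ℝ)
    (s : Fin L → Ω → ℂ)
    (hind : iIndepFun s μ)
    (hmean : ∀ n, ∫ ω, s n ω ∂μ = 0)
    (h4 : ∀ n, MemLp (s n) 4 μ)
    (τ : ℝ)
    (χs : Ω → ℂ)
    (hχs : χs = fun ω => ((∑ n : Fin L, ‖s n ω‖ ^ 2 : ℝ) : ℂ) * (G τ : ℂ))
    (χc : Ω → ℂ)
    (hχc : χc = fun ω => ∑ n : Fin L, ∑ m ∈ Finset.univ.erase n,
        s n ω * conj (s m ω) * (G (τ + ((m : ℝ) - (n : ℝ)) * T) : ℂ)) :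
    (∫ ω, χs ω * conj (χc ω) ∂μ) = 0 ∧
    (∫ ω, χs ω * conj (χc ω) ∂μ) = (∫ ω, χs ω ∂μ) * conj (∫ ω, χc ω ∂μ) := by
  subst hχs hχc
  have hcross := hind.integral_offDiag_sum_eq_zero hmean
    (fun n => (h4 n).mono_exponent (by norm_num))
    fun n m => (G (τ + ((m : ℝ) - (n : ℝ)) * T) : ℂ)
  have hself_cross := hind.integral_sum_norm_sq_mul_conj_offDiag_sum_eq_zero hmean h4
    (G τ : ℂ) fun n m => (G (τ + ((m : ℝ) - (n : ℝ)) * T) : ℂ)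
  exact ⟨hself_cross, by rw [hself_cross, hcross, map_zero, mul_zero]⟩

/-- The self-ambiguity part `χ_s(τ)` and the cross-ambiguity part `χ_c(τ)` satisfy
`E[χ_s(τ) conj(χ_c(τ))] = 0`; in particular they are uncorrelated, i.e.
`E[χ_s conj(χ_c)] = E[χ_s] · conj(E[χ_c])`. -/
theorem statement_3 {Ω : Type*} [MeasurableSpace Ω] (μ : Measure Ω) [IsProbabilityMeasure μ]
    (L : ℕ) (hL : 1 ≤ L) (T : ℝ) (hT : 0 < T)
    (g : ℝ → ℝ) (hg : MemLp g 2 (volume : Measure ℝ))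
    (G : ℝ → ℝ) (hG : ∀ τ, G τ = ∫ t : ℝ, g t * g (t - τ))
    (s : Fin L → Ω → ℂ)
    (hind : iIndepFun s μ)
    (hmean : ∀ n, ∫ ω, s n ω ∂μ = 0)
    (h4 : ∀ n, MemLp (s n) 4 μ)
    (τ : ℝ)
    (χs : Ω → ℂ)
    (hχs : χs = fun ω => ((∑ n : Fin L, ‖s n ω‖ ^ 2 : ℝ) : ℂ) * (G τ : ℂ))
    (χc : Ω → ℂ)
    (hχc : χc = fun ω => ∑ n : Fin L, ∑ m ∈ Finset.univ.erase n,
        s n ω * conj (s m ω) * (G (τ + ((m : ℝ) - (n : ℝ)) * T) : ℂ)) :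
    (∫ ω, χs ω * conj (χc ω) ∂μ) = 0 ∧
    (∫ ω, χs ω * conj (χc ω) ∂μ) = (∫ ω, χs ω ∂μ) * conj (∫ ω, χc ω ∂μ) :=
  statement_3_general μ L T G s hind hmean h4 τ χs hχs χc hχc
end

section
/- Let L ≥ 1, T > 0, let g : ℝ → ℝ be square-integrable with autocorrelation G(τ) = ∫_ℝ g(t) g(t − τ) dt, and let s_0, …, s_{L−1} be mutually independent complex random variables with E[s_n] = 0, E[s_n²] = 0, E[|s_n|²] = 1, and E[|s_n|⁴] < ∞ for all n. Define χ_c(τ) = Σ_{n=0}^{L−1} Σ_{m=0, m≠n}^{L−1} s_n · conj(s_m) · G(τ + (m − n)T). Then for every τ ∈ ℝ, Var(χ_c(τ)) = Σ_{n∈ℤ, 1 ≤ |n| ≤ L−1} (L − |n|) · G(τ + nT)². -/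
/-!
Write `χ_c = ∑_{n ≠ m} c_{nm} X_{nm}` with `X_{nm} = s_n · conj s_m`. By independence, and since
`E[s_n] = E[s_n²] = 0`, the `X_{nm}` have mean zero and are orthonormal in `L²(μ)`: in
`E[X_{nm} · conj X_{pq}]` with `(n, m) ≠ (p, q)` some index occurs either once or twice
unconjugated (as `s_n²`), and that factor splits off with zero mean. Hence
`Var χ_c = ∑_{n ≠ m} G(τ + (m − n)T)²`, and exactly `L − |k|` pairs have `m − n = k`.
-/

open MeasureTheory ProbabilityTheory Complex Finset
open scoped ComplexConjugate ENNReal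

section Orthonormal

variable {Ω κ : Type*} [MeasurableSpace Ω] {μ : Measure Ω}

theorem integral_sum_mul_eq_zero {X : κ → Ω → ℂ} {K : Finset κ} (c : κ → ℂ)
    (hX : ∀ k ∈ K, Integrable (X k) μ) (hX0 : ∀ k ∈ K, ∫ ω, X k ω ∂μ = 0) :
    ∫ ω, ∑ k ∈ K, X k ω * c k ∂μ = 0 := by
  rw [integral_finsetSum _ fun k hk => (hX k hk).mul_const _]
  exact sum_eq_zero fun k hk => by rw [integral_mul_const, hX0 k hk, zero_mul]

theorem integral_norm_sq_sum_mul_of_orthonormal {X : κ → Ω → ℂ} {K : Finset κ} (c : κ → ℂ)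
    (hX : ∀ k ∈ K, MemLp (X k) 2 μ)
    (hone : ∀ k ∈ K, ∫ ω, X k ω * conj (X k ω) ∂μ = 1)
    (hzero : ∀ k ∈ K, ∀ l ∈ K, k ≠ l → ∫ ω, X k ω * conj (X l ω) ∂μ = 0) :
    ∫ ω, ‖∑ k ∈ K, X k ω * c k‖ ^ 2 ∂μ = ∑ k ∈ K, ‖c k‖ ^ 2 := by
  have hint : ∀ k ∈ K, ∀ l ∈ K,
      Integrable (fun ω => c k * conj (c l) * (X k ω * conj (X l ω))) μ :=
    fun k hk l hl => ((hX k hk).integrable_mul (hX l hl).star).const_mul _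
  have hexpand : ∀ ω, ((‖∑ k ∈ K, X k ω * c k‖ ^ 2 : ℝ) : ℂ) =
      ∑ k ∈ K, ∑ l ∈ K, c k * conj (c l) * (X k ω * conj (X l ω)) := by
    intro ω
    rw [ofReal_pow, ← mul_conj', map_sum, sum_mul_sum]
    refine sum_congr rfl fun k _ => sum_congr rfl fun l _ => ?_
    rw [map_mul]
    ring
  have hdiag : ∀ k ∈ K, ∫ ω, ∑ l ∈ K, c k * conj (c l) * (X k ω * conj (X l ω)) ∂μ =
      (‖c k‖ : ℂ) ^ 2 := by
    intro k hk
    rw [integral_finsetSum _ (hint k hk), sum_eq_single_of_mem k hk, integral_const_mul,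
      hone k hk, mul_one, mul_conj']
    intro l hl hlk
    rw [integral_const_mul, hzero k hk l hl hlk.symm, mul_zero]
  apply ofReal_injective
  rw [← integral_complex_ofReal, integral_congr_ae (ae_of_all _ hexpand),
    integral_finsetSum _ fun k hk => integrable_finsetSum _ (hint k hk), sum_congr rfl hdiag]
  push_cast
  rfl

end Orthonormal

section Independence

variable {Ω ι β : Type*} [MeasurableSpace Ω] {μ : Measure Ω} [MeasurableSpace β]

theorem ProbabilityTheory.iIndepFun.integral_comp_mul_comp_finset_of_notMem {s : ι → Ω → β}
    (hind : iIndepFun s μ) (hs : ∀ i, AEMeasurable (s i) μ) {i : ι} {J : Finset ι} (hi : i ∉ J)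
    {f : β → ℂ} (hf : Measurable f) {F : (J → β) → ℂ} (hF : Measurable F) :
    ∫ ω, f (s i ω) * F (fun j => s j ω) ∂μ =
      (∫ ω, f (s i ω) ∂μ) * ∫ ω, F (fun j => s j ω) ∂μ :=
  (hind.indepFun_finset₀ {i} J (disjoint_singleton_left.2 hi) hs).integral_fun_comp_mul_comp
    (f := fun x => f (x ⟨i, mem_singleton_self i⟩)) (aemeasurable_pi_lambda _ fun _ => hs _)
    (aemeasurable_pi_lambda _ fun _ => hs _)
    (by exact (hf.comp (measurable_pi_apply _)).aestronglyMeasurable) hF.aestronglyMeasurable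

end Independence

section Moments

variable {Ω ι : Type*} [MeasurableSpace Ω] {μ : Measure Ω} {s : ι → Ω → ℂ}

theorem memLp_mul_conj {f g : Ω → ℂ} (hf : MemLp f 4 μ) (hg : MemLp g 4 μ) :
    MemLp (fun ω => f ω * conj (g ω)) 2 μ :=
  haveI : ENNReal.HolderTriple 4 4 2 := ⟨by
    rw [← two_mul, show (4 : ℝ≥0∞) = 2 * 2 by norm_num, ENNReal.mul_inv (by simp) (by simp),
      ← mul_assoc, ENNReal.mul_inv_cancel (by simp) (by simp), one_mul]⟩
  hg.star.mul' hf

theorem integral_mul_conj_eq_zero (hind : iIndepFun s μ) (hs : ∀ i, AEMeasurable (s i) μ)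
    {n m : ι} (hnm : n ≠ m) (hn : ∫ ω, s n ω ∂μ = 0) :
    ∫ ω, s n ω * conj (s m ω) ∂μ = 0 := by
  have := (hind.indepFun hnm).integral_fun_comp_mul_comp (f := id) (g := conj) (hs n) (hs m)
    measurable_id.aestronglyMeasurable continuous_conj.measurable.aestronglyMeasurable
  simpa [hn] using this

theorem integral_mul_conj_mul_conj_eq_zero_of_fst_ne [DecidableEq ι] (hind : iIndepFun s μ)
    (hs : ∀ i, AEMeasurable (s i) μ) {n m p q : ι} (hnm : n ≠ m) (hnp : n ≠ p)
    (hn : ∫ ω, s n ω ∂μ = 0) (hn2 : ∫ ω, s n ω ^ 2 ∂μ = 0) :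
    ∫ ω, s n ω * conj (s m ω) * conj (s p ω * conj (s q ω)) ∂μ = 0 := by
  by_cases hnq : n = q
  · subst hnq
    have := hind.integral_comp_mul_comp_finset_of_notMem hs (i := n) (J := {m, p})
      (by simp [hnm, hnp]) (f := fun z => z ^ 2) (by fun_prop)
      (F := fun x => conj (x ⟨m, by simp⟩) * conj (x ⟨p, by simp⟩)) (by fun_prop)
    rw [hn2, zero_mul] at this
    rw [← this]
    refine integral_congr_ae (ae_of_all _ fun ω => ?_)
    simp only [map_mul, conj_conj]
    ring
  · have := hind.integral_comp_mul_comp_finset_of_notMem hs (i := n) (J := {m, p, q})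
      (by simp [hnm, hnp, hnq]) (f := fun z => z) measurable_id'
      (F := fun x => conj (x ⟨m, by simp⟩) * conj (x ⟨p, by simp⟩ * conj (x ⟨q, by simp⟩)))
      (by fun_prop)
    rw [hn, zero_mul] at this
    rw [← this]
    refine integral_congr_ae (ae_of_all _ fun ω => ?_)
    simp only [mul_assoc]

theorem integral_mul_conj_mul_conj_eq_zero [DecidableEq ι] (hind : iIndepFun s μ)
    (hs : ∀ i, AEMeasurable (s i) μ) (hmean : ∀ i, ∫ ω, s i ω ∂μ = 0)
    (hsq : ∀ i, ∫ ω, s i ω ^ 2 ∂μ = 0) {n m p q : ι} (hnm : n ≠ m) (hne : n ≠ p ∨ m ≠ q) :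
    ∫ ω, s n ω * conj (s m ω) * conj (s p ω * conj (s q ω)) ∂μ = 0 := by
  rcases hne with hnp | hmq
  · exact integral_mul_conj_mul_conj_eq_zero_of_fst_ne hind hs hnm hnp (hmean n) (hsq n)
  · -- conjugation swaps the roles of `(n, p)` and `(m, q)`
    calc ∫ ω, s n ω * conj (s m ω) * conj (s p ω * conj (s q ω)) ∂μ
        = ∫ ω, conj (s m ω * conj (s n ω) * conj (s q ω * conj (s p ω))) ∂μ := by
          refine integral_congr_ae (ae_of_all _ fun ω => ?_)
          simp only [map_mul, conj_conj]
          ring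
      _ = 0 := by
          rw [integral_conj, integral_mul_conj_mul_conj_eq_zero_of_fst_ne hind hs hnm.symm hmq
            (hmean m) (hsq m), map_zero]

theorem integral_mul_conj_mul_conj_self (hind : iIndepFun s μ) (hs : ∀ i, AEMeasurable (s i) μ)
    {n m : ι} (hnm : n ≠ m) (hn : ∫ ω, ‖s n ω‖ ^ 2 ∂μ = 1) (hm : ∫ ω, ‖s m ω‖ ^ 2 ∂μ = 1) :
    ∫ ω, s n ω * conj (s m ω) * conj (s n ω * conj (s m ω)) ∂μ = 1 := by
  have hnorm : Measurable fun z : ℂ => ((‖z‖ ^ 2 : ℝ) : ℂ) := by fun_prop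
  calc ∫ ω, s n ω * conj (s m ω) * conj (s n ω * conj (s m ω)) ∂μ
      = ∫ ω, ((‖s n ω‖ ^ 2 : ℝ) : ℂ) * ((‖s m ω‖ ^ 2 : ℝ) : ℂ) ∂μ := by
        refine integral_congr_ae (ae_of_all _ fun ω => ?_)
        simp only [map_mul, conj_conj, ofReal_pow, ← mul_conj']
        ring
    _ = (∫ ω, ((‖s n ω‖ ^ 2 : ℝ) : ℂ) ∂μ) * ∫ ω, ((‖s m ω‖ ^ 2 : ℝ) : ℂ) ∂μ :=
        (hind.indepFun hnm).integral_fun_comp_mul_comp (hs n) (hs m)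
          hnorm.aestronglyMeasurable hnorm.aestronglyMeasurable
    _ = 1 := by rw [integral_complex_ofReal, integral_complex_ofReal, hn, hm]; simp

end Moments

theorem sum_offDiag_eq_sum_sum_erase {α M : Type*} [DecidableEq α] [AddCommMonoid M]
    (s : Finset α) (f : α × α → M) :
    ∑ p ∈ s.offDiag, f p = ∑ a ∈ s, ∑ b ∈ s.erase a, f (a, b) :=
  sum_finset_product _ _ _ fun p => by rw [mem_offDiag, mem_erase]; tauto

theorem card_offDiag_filter_sub_eq (L : ℕ) {k : ℤ} (hk : k ≠ 0) :
    #{p ∈ (univ : Finset (Fin L)).offDiag | (p.2 : ℤ) - p.1 = k} =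
      (min (L : ℤ) (L - k) - max 0 (-k)).toNat := by
  rw [← Int.card_Ico]
  refine card_bij (fun p _ => (p.1 : ℤ)) ?_ ?_ ?_
  · intro p hp
    simp only [mem_filter, mem_offDiag, mem_Ico] at hp ⊢
    omega
  · intro p hp q hq h
    simp only [mem_filter, mem_offDiag, Nat.cast_inj] at hp hq h
    ext <;> omega
  · intro x hx
    simp only [mem_Ico] at hx
    refine ⟨(⟨x.toNat, by omega⟩, ⟨(x + k).toNat, by omega⟩), ?_, by simp; omega⟩
    simp only [mem_filter, mem_offDiag, mem_univ, ne_eq, Fin.mk.injEq, true_and]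
    omega

theorem sum_offDiag_sub_eq (L : ℕ) (f : ℤ → ℝ) :
    ∑ p ∈ (univ : Finset (Fin L)).offDiag, f (p.2 - p.1) =
      ∑ k ∈ (Icc (-(L : ℤ) + 1) ((L : ℤ) - 1)).erase 0, ((L : ℝ) - |(k : ℝ)|) * f k := by
  rw [← sum_fiberwise_of_maps_to (g := fun p : Fin L × Fin L => (p.2 : ℤ) - p.1)]
  · refine sum_congr rfl fun k hk => ?_
    rw [mem_erase, mem_Icc] at hk
    have hcard_int : ((min (L : ℤ) (L - k) - max 0 (-k)).toNat : ℤ) = L - |k| := by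
      rcases abs_cases k with h | h <;> omega
    have hcard : ((min (L : ℤ) (L - k) - max 0 (-k)).toNat : ℝ) = L - |(k : ℝ)| := by
      rw [← Int.cast_abs]
      exact_mod_cast hcard_int
    rw [sum_congr rfl fun p hp => congrArg f (mem_filter.1 hp).2, sum_const,
      card_offDiag_filter_sub_eq L hk.1, nsmul_eq_mul, hcard]
  · intro p hp
    simp only [mem_offDiag] at hp
    simp only [mem_erase, mem_Icc]
    omega

theorem statement_5_general {Ω : Type*} [MeasurableSpace Ω] (μ : Measure Ω) [IsProbabilityMeasure μ]
    (L : ℕ) (T : ℝ)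
    (G : ℝ → ℝ)
    (s : Fin L → Ω → ℂ)
    (hind : iIndepFun s μ)
    (hmem : ∀ n, MemLp (s n) 4 μ)
    (hmean : ∀ n, ∫ ω, s n ω ∂μ = 0)
    (hsq : ∀ n, ∫ ω, (s n ω) ^ 2 ∂μ = 0)
    (h2 : ∀ n, ∫ ω, ‖s n ω‖ ^ 2 ∂μ = 1)
    (τ : ℝ)
    (χc : Ω → ℂ)
    (hχc : χc = fun ω => ∑ n : Fin L, ∑ m ∈ Finset.univ.erase n,
        s n ω * conj (s m ω) * (G (τ + ((m : ℝ) - (n : ℝ)) * T) : ℂ)) :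
    (∫ ω, ‖χc ω‖ ^ 2 ∂μ) - ‖∫ ω, χc ω ∂μ‖ ^ 2 =
      ∑ k ∈ (Finset.Icc (-(L : ℤ) + 1) ((L : ℤ) - 1)).erase 0,
        ((L : ℝ) - |(k : ℝ)|) * G (τ + (k : ℝ) * T) ^ 2 := by
  have hs : ∀ n, AEMeasurable (s n) μ := fun n => (hmem n).aestronglyMeasurable.aemeasurable
  set X : Fin L × Fin L → Ω → ℂ := fun k ω => s k.1 ω * conj (s k.2 ω)
  set c : Fin L × Fin L → ℂ := fun k => (G (τ + ((k.2 : ℝ) - k.1) * T) : ℂ)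
  have hχ : χc = fun ω => ∑ k ∈ univ.offDiag, X k ω * c k := by
    rw [hχc]
    exact funext fun ω => (sum_offDiag_eq_sum_sum_erase univ fun k => X k ω * c k).symm
  have hX : ∀ k ∈ univ.offDiag, MemLp (X k) 2 μ := fun k _ => memLp_mul_conj (hmem _) (hmem _)
  have hne : ∀ k ∈ (univ : Finset (Fin L)).offDiag, k.1 ≠ k.2 :=
    fun k hk => (mem_offDiag.1 hk).2.2
  rw [hχ, integral_sum_mul_eq_zero c (fun k hk => (hX k hk).integrable one_le_two)
      (fun k hk => integral_mul_conj_eq_zero hind hs (hne k hk) (hmean _)),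
    integral_norm_sq_sum_mul_of_orthonormal c hX
      (fun k hk => integral_mul_conj_mul_conj_self hind hs (hne k hk) (h2 _) (h2 _))
      (fun k hk l _ hkl => integral_mul_conj_mul_conj_eq_zero hind hs hmean hsq (hne k hk)
        (by rwa [Ne, Prod.ext_iff, not_and_or] at hkl)),
    norm_zero, sq, zero_mul, sub_zero, ← sum_offDiag_sub_eq]
  refine sum_congr rfl fun k _ => ?_
  simp only [c, norm_real, Real.norm_eq_abs, sq_abs]
  push_cast
  rfl

/-- Variance of the cross-ambiguity part:
`Var(χ_c(τ)) = Σ_{1 ≤ |k| ≤ L−1} (L − |k|) G(τ + kT)²`, where the variance of a complex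
random variable `X` is `E[|X|²] − |E[X]|²`. -/
theorem statement_5 {Ω : Type*} [MeasurableSpace Ω] (μ : Measure Ω) [IsProbabilityMeasure μ]
    (L : ℕ) (hL : 1 ≤ L) (T : ℝ) (hT : 0 < T)
    (g : ℝ → ℝ) (hg : MemLp g 2 (volume : Measure ℝ))
    (G : ℝ → ℝ) (hG : ∀ τ, G τ = ∫ t : ℝ, g t * g (t - τ))
    (s : Fin L → Ω → ℂ)
    (hind : iIndepFun s μ)
    (hmem : ∀ n, MemLp (s n) 4 μ)
    (hmean : ∀ n, ∫ ω, s n ω ∂μ = 0)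
    (hsq : ∀ n, ∫ ω, (s n ω) ^ 2 ∂μ = 0)
    (h2 : ∀ n, ∫ ω, ‖s n ω‖ ^ 2 ∂μ = 1)
    (τ : ℝ)
    (χc : Ω → ℂ)
    (hχc : χc = fun ω => ∑ n : Fin L, ∑ m ∈ Finset.univ.erase n,
        s n ω * conj (s m ω) * (G (τ + ((m : ℝ) - (n : ℝ)) * T) : ℂ)) :
    (∫ ω, ‖χc ω‖ ^ 2 ∂μ) - ‖∫ ω, χc ω ∂μ‖ ^ 2 =
      ∑ k ∈ (Finset.Icc (-(L : ℤ) + 1) ((L : ℤ) - 1)).erase 0,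
        ((L : ℝ) - |(k : ℝ)|) * G (τ + (k : ℝ) * T) ^ 2 :=
  statement_5_general μ L T G s hind hmem hmean hsq h2 τ χc hχc
end
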